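/- arXiv:2210.04470 — 6 statements merged into one kernel-verified Lean document; each statement's English description precedes it below -/
import Mathlib

section
/- Let V̂ be a solution of the Bellman equation for the SRP π̂, i.e. V̂(i) = Σ_{a∈U} π̂(i,a) Σ_{j∈S} p(i,a,j)(g(i,a,j) + γ V̂(j)) for all i, and let V* be a solution of the Bellman equation for the SRP π*, i.e. V*(i) = Σ_{a∈U} π*(i,a) Σ_{j∈S} p(i,a,j)(g(i,a,j) + γ V*(j)) for all i. Then max_i |V̂(i) − V*(i)| ≤ (max_i Σ_{a∈U} |π̂(i,a) − π*(i,a)|) · (max_{i,a} |ḡ(i,a)|) / (1 − γ)². -/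
/-- Proposition 1: for SRPs π̂ and π* with value functions V̂ and V*,
`‖V̂ - V*‖_∞ ≤ (max_i ‖π̂(i,·) - π*(i,·)‖₁ · max_{i,a} |ḡ(i,a)|) / (1-γ)²`. -/
theorem stmt_0 {S U : Type*} [Fintype S] [Fintype U] [Nonempty S] [Nonempty U]
    (p : S → U → S → ℝ) (hp0 : ∀ i a j, 0 ≤ p i a j)
    (hp1 : ∀ i a, ∑ j, p i a j = 1)
    (g : S → U → S → ℝ) (γ : ℝ) (hγ : γ ∈ Set.Ioo (0 : ℝ) 1)
    (πhat πstar : S → U → ℝ)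
    (hπhat0 : ∀ i a, 0 ≤ πhat i a) (hπhat1 : ∀ i, ∑ a, πhat i a = 1)
    (hπstar0 : ∀ i a, 0 ≤ πstar i a) (hπstar1 : ∀ i, ∑ a, πstar i a = 1)
    (Vhat Vstar : S → ℝ)
    (hVhat : ∀ i, Vhat i = ∑ a, πhat i a * ∑ j, p i a j * (g i a j + γ * Vhat j))
    (hVstar : ∀ i, Vstar i = ∑ a, πstar i a * ∑ j, p i a j * (g i a j + γ * Vstar j)) :
    (Finset.univ.sup' Finset.univ_nonempty fun i => |Vhat i - Vstar i|) ≤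
      (Finset.univ.sup' Finset.univ_nonempty fun i => ∑ a, |πhat i a - πstar i a|) *
        (Finset.univ.sup' Finset.univ_nonempty fun ia : S × U =>
          |∑ j, p ia.1 ia.2 j * g ia.1 ia.2 j|) / (1 - γ) ^ 2 := by
  obtain ⟨hγ0, hγ1⟩ := hγ
  have h1γ : (0:ℝ) < 1 - γ := by linarith
  set D := Finset.univ.sup' Finset.univ_nonempty fun i => |Vhat i - Vstar i| with hDdef
  set Δ := Finset.univ.sup' Finset.univ_nonempty fun i => ∑ a, |πhat i a - πstar i a| with hΔdef
  set G := Finset.univ.sup' Finset.univ_nonempty (fun ia : S × U =>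
      |∑ j, p ia.1 ia.2 j * g ia.1 ia.2 j|) with hGdef
  set W := Finset.univ.sup' Finset.univ_nonempty (fun i => |Vhat i|) with hWdef
  have hGle : ∀ i a, |∑ j, p i a j * g i a j| ≤ G := fun i a =>
    Finset.le_sup' (fun ia : S × U => |∑ j, p ia.1 ia.2 j * g ia.1 ia.2 j|)
      (Finset.mem_univ (i, a))
  have hG0 : 0 ≤ G :=
    le_trans (abs_nonneg _) (hGle (Classical.arbitrary S) (Classical.arbitrary U))
  have hWle : ∀ j, |Vhat j| ≤ W := fun j => Finset.le_sup' (fun i => |Vhat i|) (Finset.mem_univ j)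
  have hW0 : 0 ≤ W := le_trans (abs_nonneg _) (hWle (Classical.arbitrary S))
  have hDle : ∀ j, |Vhat j - Vstar j| ≤ D := fun j =>
    Finset.le_sup' (fun i => |Vhat i - Vstar i|) (Finset.mem_univ j)
  have hD0 : 0 ≤ D := le_trans (abs_nonneg _) (hDle (Classical.arbitrary S))
  have hΔle : ∀ i, ∑ a, |πhat i a - πstar i a| ≤ Δ := fun i =>
    Finset.le_sup' (fun i => ∑ a, |πhat i a - πstar i a|) (Finset.mem_univ i)
  have hΔ0 : 0 ≤ Δ :=
    le_trans (Finset.sum_nonneg fun a _ => abs_nonneg _) (hΔle (Classical.arbitrary S))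
  -- weighted average bound
  have hpV : ∀ (i : S) (a : U) (V : S → ℝ) (M : ℝ), (∀ j, |V j| ≤ M) →
      |∑ j, p i a j * V j| ≤ M := by
    intro i a V M hM
    calc |∑ j, p i a j * V j| ≤ ∑ j, |p i a j * V j| := Finset.abs_sum_le_sum_abs _ _
      _ ≤ ∑ j, p i a j * M := Finset.sum_le_sum (fun j _ => by
          rw [abs_mul, abs_of_nonneg (hp0 i a j)]
          exact mul_le_mul_of_nonneg_left (hM j) (hp0 i a j))
      _ = M := by rw [← Finset.sum_mul, hp1]; ring
  have hsplit : ∀ (i : S) (a : U) (V : S → ℝ),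
      ∑ j, p i a j * (g i a j + γ * V j)
        = (∑ j, p i a j * g i a j) + γ * ∑ j, p i a j * V j := by
    intro i a V
    rw [Finset.mul_sum, ← Finset.sum_add_distrib]
    exact Finset.sum_congr rfl fun j _ => by ring
  have hQhat : ∀ i a, |∑ j, p i a j * (g i a j + γ * Vhat j)| ≤ G + γ * W := by
    intro i a
    rw [hsplit]
    calc |(∑ j, p i a j * g i a j) + γ * ∑ j, p i a j * Vhat j|
        ≤ |∑ j, p i a j * g i a j| + |γ * ∑ j, p i a j * Vhat j| := abs_add_le _ _
      _ ≤ G + γ * W := by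
          rw [abs_mul, abs_of_pos hγ0]
          exact add_le_add (hGle i a)
            (mul_le_mul_of_nonneg_left (hpV i a Vhat W hWle) hγ0.le)
  -- W bound : W ≤ G + γ W
  have hWG : W ≤ G + γ * W := by
    apply Finset.sup'_le
    intro i _
    rw [hVhat i]
    calc |∑ a, πhat i a * ∑ j, p i a j * (g i a j + γ * Vhat j)|
        ≤ ∑ a, |πhat i a * ∑ j, p i a j * (g i a j + γ * Vhat j)| :=
          Finset.abs_sum_le_sum_abs _ _
      _ ≤ ∑ a, πhat i a * (G + γ * W) := Finset.sum_le_sum (fun a _ => by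
          rw [abs_mul, abs_of_nonneg (hπhat0 i a)]
          exact mul_le_mul_of_nonneg_left (hQhat i a) (hπhat0 i a))
      _ = G + γ * W := by rw [← Finset.sum_mul, hπhat1]; ring
  -- D bound : D ≤ Δ (G + γ W) + γ D
  have hDB : D ≤ Δ * (G + γ * W) + γ * D := by
    apply Finset.sup'_le
    intro i _
    have key : Vhat i - Vstar i
        = (∑ a, (πhat i a - πstar i a) * ∑ j, p i a j * (g i a j + γ * Vhat j))
          + ∑ a, πstar i a * (γ * ∑ j, p i a j * (Vhat j - Vstar j)) := by
      rw [hVhat i, hVstar i, ← Finset.sum_add_distrib, ← Finset.sum_sub_distrib]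
      refine Finset.sum_congr rfl fun a _ => ?_
      rw [hsplit i a Vhat, hsplit i a Vstar,
        show (∑ j, p i a j * (Vhat j - Vstar j))
          = (∑ j, p i a j * Vhat j) - ∑ j, p i a j * Vstar j by
            rw [← Finset.sum_sub_distrib]; exact Finset.sum_congr rfl fun j _ => by ring]
      ring
    rw [key]
    calc |(∑ a, (πhat i a - πstar i a) * ∑ j, p i a j * (g i a j + γ * Vhat j))
          + ∑ a, πstar i a * (γ * ∑ j, p i a j * (Vhat j - Vstar j))|
        ≤ |∑ a, (πhat i a - πstar i a) * ∑ j, p i a j * (g i a j + γ * Vhat j)|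
          + |∑ a, πstar i a * (γ * ∑ j, p i a j * (Vhat j - Vstar j))| := abs_add_le _ _
      _ ≤ (∑ a, |πhat i a - πstar i a| * (G + γ * W))
          + ∑ a, πstar i a * (γ * D) := by
          refine add_le_add (le_trans (Finset.abs_sum_le_sum_abs _ _)
            (Finset.sum_le_sum fun a _ => ?_))
            (le_trans (Finset.abs_sum_le_sum_abs _ _)
            (Finset.sum_le_sum fun a _ => ?_))
          · rw [abs_mul]
            exact mul_le_mul_of_nonneg_left (hQhat i a) (abs_nonneg _)
          · rw [abs_mul, abs_of_nonneg (hπstar0 i a), abs_mul, abs_of_pos hγ0]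
            exact mul_le_mul_of_nonneg_left
              (mul_le_mul_of_nonneg_left
                (hpV i a (fun j => Vhat j - Vstar j) D hDle) hγ0.le) (hπstar0 i a)
      _ ≤ Δ * (G + γ * W) + γ * D := by
          rw [← Finset.sum_mul, ← Finset.sum_mul, hπstar1]
          have : 0 ≤ G + γ * W := by positivity
          nlinarith [hΔle i]
  rw [le_div_iff₀ (by positivity : (0:ℝ) < (1 - γ)^2)]
  nlinarith [mul_le_mul_of_nonneg_left hWG hΔ0, mul_le_mul_of_nonneg_right hDB h1γ.le]
end

section
/- Let V̂ satisfy the Bellman equation for an SRP π̂ and V* satisfy the Bellman equation for an SRP π* (as in the previous statements). Then max_i |V̂(i) − V*(i)| ≤ (max_i Σ_{a∈U} |π̂(i,a) − π*(i,a)|) · (max_{i,a} |ḡ(i,a)|) + γ · max_i |V̂(i) − V*(i)| + γ · (max_i Σ_{a∈U} |π̂(i,a) − π*(i,a)|) · max_j |V*(j)|. -/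
/-- Sup-norm inequality (eq. (9) of the paper) for value functions of two SRPs. -/
theorem stmt_3 {S U : Type*} [Fintype S] [Fintype U] [Nonempty S] [Nonempty U]
    (p : S → U → S → ℝ) (hp0 : ∀ i a j, 0 ≤ p i a j)
    (hp1 : ∀ i a, ∑ j, p i a j = 1)
    (g : S → U → S → ℝ) (γ : ℝ) (hγ : γ ∈ Set.Ioo (0 : ℝ) 1)
    (πhat πstar : S → U → ℝ)
    (hπhat0 : ∀ i a, 0 ≤ πhat i a) (hπhat1 : ∀ i, ∑ a, πhat i a = 1)
    (hπstar0 : ∀ i a, 0 ≤ πstar i a) (hπstar1 : ∀ i, ∑ a, πstar i a = 1)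
    (Vhat Vstar : S → ℝ)
    (hVhat : ∀ i, Vhat i = ∑ a, πhat i a * ∑ j, p i a j * (g i a j + γ * Vhat j))
    (hVstar : ∀ i, Vstar i = ∑ a, πstar i a * ∑ j, p i a j * (g i a j + γ * Vstar j)) :
    (Finset.univ.sup' Finset.univ_nonempty fun i => |Vhat i - Vstar i|) ≤
      (Finset.univ.sup' Finset.univ_nonempty fun i => ∑ a, |πhat i a - πstar i a|) *
        (Finset.univ.sup' Finset.univ_nonempty fun ia : S × U =>
          |∑ j, p ia.1 ia.2 j * g ia.1 ia.2 j|)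
      + γ * (Finset.univ.sup' Finset.univ_nonempty fun i => |Vhat i - Vstar i|)
      + γ * (Finset.univ.sup' Finset.univ_nonempty fun i => ∑ a, |πhat i a - πstar i a|) *
          (Finset.univ.sup' Finset.univ_nonempty fun j => |Vstar j|) := by
  obtain ⟨hγ0, hγ1⟩ := hγ
  set M := (Finset.univ.sup' Finset.univ_nonempty fun i => |Vhat i - Vstar i|) with hM
  set D := (Finset.univ.sup' Finset.univ_nonempty fun i => ∑ a, |πhat i a - πstar i a|) with hD
  set G := (Finset.univ.sup' Finset.univ_nonempty fun ia : S × U =>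
      |∑ j, p ia.1 ia.2 j * g ia.1 ia.2 j|) with hG
  set B := (Finset.univ.sup' Finset.univ_nonempty fun j => |Vstar j|) with hB
  have hMle : ∀ j, |Vhat j - Vstar j| ≤ M := fun j =>
    Finset.le_sup' (fun i => |Vhat i - Vstar i|) (Finset.mem_univ j)
  have hGle : ∀ i a, |∑ j, p i a j * g i a j| ≤ G := fun i a =>
    Finset.le_sup' (fun ia : S × U => |∑ j, p ia.1 ia.2 j * g ia.1 ia.2 j|)
      (Finset.mem_univ (i, a))
  have hBle : ∀ j, |Vstar j| ≤ B := fun j =>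
    Finset.le_sup' (fun j => |Vstar j|) (Finset.mem_univ j)
  have hDle : ∀ i, ∑ a, |πhat i a - πstar i a| ≤ D := fun i =>
    Finset.le_sup' (fun i => ∑ a, |πhat i a - πstar i a|) (Finset.mem_univ i)
  have hB0 : 0 ≤ B := le_trans (abs_nonneg _) (hBle (Classical.arbitrary S))
  have hG0 : 0 ≤ G :=
    le_trans (abs_nonneg _) (hGle (Classical.arbitrary S) (Classical.arbitrary U))
  have hM0 : 0 ≤ M := le_trans (abs_nonneg _) (hMle (Classical.arbitrary S))
  apply Finset.sup'_le
  intro i _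
  have key : Vhat i - Vstar i =
      (∑ a, πhat i a * (γ * ∑ j, p i a j * (Vhat j - Vstar j)))
      + ∑ a, (πhat i a - πstar i a) *
          ((∑ j, p i a j * g i a j) + γ * ∑ j, p i a j * Vstar j) := by
    rw [hVhat i, hVstar i, ← Finset.sum_add_distrib, ← Finset.sum_sub_distrib]
    apply Finset.sum_congr rfl
    intro a _
    have e1 : ∑ j, p i a j * (g i a j + γ * Vhat j)
        = (∑ j, p i a j * g i a j) + γ * ∑ j, p i a j * Vhat j := by
      rw [Finset.mul_sum, ← Finset.sum_add_distrib]
      exact Finset.sum_congr rfl fun j _ => by ring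
    have e2 : ∑ j, p i a j * (g i a j + γ * Vstar j)
        = (∑ j, p i a j * g i a j) + γ * ∑ j, p i a j * Vstar j := by
      rw [Finset.mul_sum, ← Finset.sum_add_distrib]
      exact Finset.sum_congr rfl fun j _ => by ring
    have e3 : ∑ j, p i a j * (Vhat j - Vstar j)
        = (∑ j, p i a j * Vhat j) - ∑ j, p i a j * Vstar j := by
      rw [← Finset.sum_sub_distrib]
      exact Finset.sum_congr rfl fun j _ => by ring
    rw [e1, e2, e3]; ring
  have inner1 : ∀ a : U, |∑ j, p i a j * (Vhat j - Vstar j)| ≤ M := by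
    intro a
    calc |∑ j, p i a j * (Vhat j - Vstar j)|
        ≤ ∑ j, |p i a j * (Vhat j - Vstar j)| := Finset.abs_sum_le_sum_abs _ _
      _ ≤ ∑ j, p i a j * M := by
          apply Finset.sum_le_sum; intro j _
          rw [abs_mul, abs_of_nonneg (hp0 i a j)]
          exact mul_le_mul_of_nonneg_left (hMle j) (hp0 i a j)
      _ = M := by rw [← Finset.sum_mul, hp1 i a, one_mul]
  have inner2 : ∀ a : U, |∑ j, p i a j * Vstar j| ≤ B := by
    intro a
    calc |∑ j, p i a j * Vstar j|
        ≤ ∑ j, |p i a j * Vstar j| := Finset.abs_sum_le_sum_abs _ _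
      _ ≤ ∑ j, p i a j * B := by
          apply Finset.sum_le_sum; intro j _
          rw [abs_mul, abs_of_nonneg (hp0 i a j)]
          exact mul_le_mul_of_nonneg_left (hBle j) (hp0 i a j)
      _ = B := by rw [← Finset.sum_mul, hp1 i a, one_mul]
  have h1 : |∑ a, πhat i a * (γ * ∑ j, p i a j * (Vhat j - Vstar j))| ≤ γ * M := by
    calc |∑ a, πhat i a * (γ * ∑ j, p i a j * (Vhat j - Vstar j))|
        ≤ ∑ a, |πhat i a * (γ * ∑ j, p i a j * (Vhat j - Vstar j))| :=
          Finset.abs_sum_le_sum_abs _ _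
      _ ≤ ∑ a, πhat i a * (γ * M) := by
          apply Finset.sum_le_sum; intro a _
          rw [abs_mul, abs_of_nonneg (hπhat0 i a), abs_mul, abs_of_nonneg (le_of_lt hγ0)]
          exact mul_le_mul_of_nonneg_left
            (mul_le_mul_of_nonneg_left (inner1 a) (le_of_lt hγ0)) (hπhat0 i a)
      _ = γ * M := by rw [← Finset.sum_mul, hπhat1 i, one_mul]
  have h2 : |∑ a, (πhat i a - πstar i a) *
      ((∑ j, p i a j * g i a j) + γ * ∑ j, p i a j * Vstar j)| ≤ D * (G + γ * B) := by
    calc |∑ a, (πhat i a - πstar i a) *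
        ((∑ j, p i a j * g i a j) + γ * ∑ j, p i a j * Vstar j)|
        ≤ ∑ a, |(πhat i a - πstar i a) *
            ((∑ j, p i a j * g i a j) + γ * ∑ j, p i a j * Vstar j)| :=
          Finset.abs_sum_le_sum_abs _ _
      _ ≤ ∑ a, |πhat i a - πstar i a| * (G + γ * B) := by
          apply Finset.sum_le_sum; intro a _
          rw [abs_mul]
          refine mul_le_mul_of_nonneg_left ?_ (abs_nonneg _)
          calc |(∑ j, p i a j * g i a j) + γ * ∑ j, p i a j * Vstar j|
              ≤ |∑ j, p i a j * g i a j| + |γ * ∑ j, p i a j * Vstar j| := abs_add_le _ _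
            _ ≤ G + γ * B := by
                refine add_le_add (hGle i a) ?_
                rw [abs_mul, abs_of_nonneg (le_of_lt hγ0)]
                exact mul_le_mul_of_nonneg_left (inner2 a) (le_of_lt hγ0)
      _ = (∑ a, |πhat i a - πstar i a|) * (G + γ * B) := by rw [Finset.sum_mul]
      _ ≤ D * (G + γ * B) := by
          refine mul_le_mul_of_nonneg_right (hDle i) ?_
          positivity
  calc |Vhat i - Vstar i|
      = |(∑ a, πhat i a * (γ * ∑ j, p i a j * (Vhat j - Vstar j)))
        + ∑ a, (πhat i a - πstar i a) *
            ((∑ j, p i a j * g i a j) + γ * ∑ j, p i a j * Vstar j)| := by rw [key]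
    _ ≤ γ * M + D * (G + γ * B) := le_trans (abs_add_le _ _) (add_le_add h1 h2)
    _ = D * G + γ * M + γ * D * B := by ring
end

section
/- Fix an SRP π* and a solution V* of its Bellman equation. For every ε > 0 there exists δ > 0 such that for any SRP π̂ with max_i Σ_{a∈U} |π̂(i,a) − π*(i,a)| < δ, any solution V̂ of the Bellman equation for π̂ satisfies max_i |V̂(i) − V*(i)| < ε. -/
/-- Continuity of the map π ↦ V_π at a fixed SRP π*, in the ε-δ sense. -/
theorem stmt_4 {S U : Type*} [Fintype S] [Fintype U] [Nonempty S] [Nonempty U]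
    (p : S → U → S → ℝ) (hp0 : ∀ i a j, 0 ≤ p i a j)
    (hp1 : ∀ i a, ∑ j, p i a j = 1)
    (g : S → U → S → ℝ) (γ : ℝ) (hγ : γ ∈ Set.Ioo (0 : ℝ) 1)
    (πstar : S → U → ℝ)
    (hπstar0 : ∀ i a, 0 ≤ πstar i a) (hπstar1 : ∀ i, ∑ a, πstar i a = 1)
    (Vstar : S → ℝ)
    (hVstar : ∀ i, Vstar i = ∑ a, πstar i a * ∑ j, p i a j * (g i a j + γ * Vstar j)) :
    ∀ ε > (0 : ℝ), ∃ δ > (0 : ℝ), ∀ πhat : S → U → ℝ,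
      (∀ i a, 0 ≤ πhat i a) → (∀ i, ∑ a, πhat i a = 1) →
      (Finset.univ.sup' Finset.univ_nonempty fun i => ∑ a, |πhat i a - πstar i a|) < δ →
      ∀ Vhat : S → ℝ,
        (∀ i, Vhat i = ∑ a, πhat i a * ∑ j, p i a j * (g i a j + γ * Vhat j)) →
        (Finset.univ.sup' Finset.univ_nonempty fun i => |Vhat i - Vstar i|) < ε := by
  intro ε hε
  obtain ⟨hγ0, hγ1⟩ := hγ
  set Q : S → U → ℝ := fun i a => ∑ j, p i a j * (g i a j + γ * Vstar j) with hQ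
  have hSU : (Finset.univ : Finset (S × U)).Nonempty := Finset.univ_nonempty
  set M : ℝ := Finset.univ.sup' hSU (fun x : S × U => |Q x.1 x.2|) with hMdef
  have hMle : ∀ i a, |Q i a| ≤ M := fun i a =>
    Finset.le_sup' (f := fun x : S × U => |Q x.1 x.2|) (Finset.mem_univ (⟨i, a⟩ : S × U))
  have hM0 : 0 ≤ M := by
    obtain ⟨i⟩ := ‹Nonempty S›
    obtain ⟨a⟩ := ‹Nonempty U›
    exact le_trans (abs_nonneg (Q i a)) (hMle i a)
  have hM1 : (0 : ℝ) < M + 1 := by linarith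
  refine ⟨ε * (1 - γ) / (M + 1), div_pos (mul_pos hε (by linarith)) hM1, ?_⟩
  intro πhat hπ0 hπ1 hδ Vhat hVhat
  set D : ℝ := Finset.univ.sup' Finset.univ_nonempty (fun i => |Vhat i - Vstar i|) with hDdef
  set s : ℝ := Finset.univ.sup' Finset.univ_nonempty
      (fun i => ∑ a, |πhat i a - πstar i a|) with hsdef
  have hDle : ∀ j, |Vhat j - Vstar j| ≤ D := fun j =>
    Finset.le_sup' (f := fun i => |Vhat i - Vstar i|) (Finset.mem_univ j)
  have hsle : ∀ i, ∑ a, |πhat i a - πstar i a| ≤ s := fun i =>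
    Finset.le_sup' (f := fun i => ∑ a, |πhat i a - πstar i a|) (Finset.mem_univ i)
  have hs0 : 0 ≤ s := by
    obtain ⟨i⟩ := ‹Nonempty S›
    exact le_trans (Finset.sum_nonneg fun a _ => abs_nonneg _) (hsle i)
  have hD0 : 0 ≤ D := by
    obtain ⟨i⟩ := ‹Nonempty S›
    exact le_trans (abs_nonneg _) (hDle i)
  -- key algebraic identity
  have key : ∀ i, Vhat i - Vstar i =
      (∑ a, (πhat i a - πstar i a) * Q i a)
      + γ * ∑ a, πhat i a * ∑ j, p i a j * (Vhat j - Vstar j) := by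
    intro i
    have hA : ∀ a, (∑ j, p i a j * (g i a j + γ * Vhat j))
        = Q i a + γ * ∑ j, p i a j * (Vhat j - Vstar j) := by
      intro a
      rw [hQ]
      simp only
      rw [Finset.mul_sum, ← Finset.sum_add_distrib]
      exact Finset.sum_congr rfl fun j _ => by ring
    rw [hVhat i]
    nth_rewrite 1 [hVstar i]
    rw [← Finset.sum_sub_distrib, Finset.mul_sum, ← Finset.sum_add_distrib]
    refine Finset.sum_congr rfl fun a _ => ?_
    rw [hA a]
    ring
  -- inner bound
  have hinner : ∀ i a, |∑ j, p i a j * (Vhat j - Vstar j)| ≤ D := by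
    intro i a
    calc |∑ j, p i a j * (Vhat j - Vstar j)|
        ≤ ∑ j, |p i a j * (Vhat j - Vstar j)| := Finset.abs_sum_le_sum_abs _ _
      _ ≤ ∑ j, p i a j * D := by
          refine Finset.sum_le_sum fun j _ => ?_
          rw [abs_mul, abs_of_nonneg (hp0 i a j)]
          exact mul_le_mul_of_nonneg_left (hDle j) (hp0 i a j)
      _ = D := by rw [← Finset.sum_mul, hp1 i a, one_mul]
  -- per-state bound
  have bound : ∀ i, |Vhat i - Vstar i| ≤ s * M + γ * D := by
    intro i
    rw [key i]
    have h1 : |∑ a, (πhat i a - πstar i a) * Q i a| ≤ s * M := by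
      calc |∑ a, (πhat i a - πstar i a) * Q i a|
          ≤ ∑ a, |(πhat i a - πstar i a) * Q i a| := Finset.abs_sum_le_sum_abs _ _
        _ ≤ ∑ a, |πhat i a - πstar i a| * M := by
            refine Finset.sum_le_sum fun a _ => ?_
            rw [abs_mul]
            exact mul_le_mul_of_nonneg_left (hMle i a) (abs_nonneg _)
        _ = (∑ a, |πhat i a - πstar i a|) * M := (Finset.sum_mul _ _ _).symm
        _ ≤ s * M := mul_le_mul_of_nonneg_right (hsle i) hM0
    have h2 : |∑ a, πhat i a * ∑ j, p i a j * (Vhat j - Vstar j)| ≤ D := by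
      calc |∑ a, πhat i a * ∑ j, p i a j * (Vhat j - Vstar j)|
          ≤ ∑ a, |πhat i a * ∑ j, p i a j * (Vhat j - Vstar j)| :=
            Finset.abs_sum_le_sum_abs _ _
        _ ≤ ∑ a, πhat i a * D := by
            refine Finset.sum_le_sum fun a _ => ?_
            rw [abs_mul, abs_of_nonneg (hπ0 i a)]
            exact mul_le_mul_of_nonneg_left (hinner i a) (hπ0 i a)
        _ = D := by rw [← Finset.sum_mul, hπ1 i, one_mul]
    calc |(∑ a, (πhat i a - πstar i a) * Q i a)
          + γ * ∑ a, πhat i a * ∑ j, p i a j * (Vhat j - Vstar j)|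
        ≤ |∑ a, (πhat i a - πstar i a) * Q i a|
          + |γ * ∑ a, πhat i a * ∑ j, p i a j * (Vhat j - Vstar j)| := abs_add_le _ _
      _ ≤ s * M + γ * D := by
          refine add_le_add h1 ?_
          rw [abs_mul, abs_of_nonneg (le_of_lt hγ0)]
          exact mul_le_mul_of_nonneg_left h2 (le_of_lt hγ0)
  have hDbound : D ≤ s * M + γ * D :=
    Finset.sup'_le _ _ fun i _ => bound i
  -- conclude
  have hδ' : s * (M + 1) < ε * (1 - γ) := by
    have := mul_lt_mul_of_pos_right hδ hM1
    rwa [div_mul_cancel₀ _ (ne_of_gt hM1)] at this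
  have : s * M ≤ s * (M + 1) := by nlinarith
  nlinarith
end

section
/- For any SRP π, the operator T_π defined on functions V : S → ℝ by (T_π V)(i) = Σ_{a∈U} π(i,a) Σ_{j∈S} p(i,a,j)(g(i,a,j) + γ V(j)) is a contraction with Lipschitz constant γ in the supremum norm, and consequently there exists a unique V_π : S → ℝ satisfying V_π(i) = Σ_{a∈U} π(i,a) Σ_{j∈S} p(i,a,j)(g(i,a,j) + γ V_π(j)) for all i. -/
lemma key_bound {S U : Type*} [Fintype S] [Fintype U]
    (p : S → U → S → ℝ) (hp0 : ∀ i a j, 0 ≤ p i a j)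
    (hp1 : ∀ i a, ∑ j, p i a j = 1)
    (g : S → U → S → ℝ) (γ : ℝ) (hγ0 : 0 ≤ γ)
    (π : S → U → ℝ)
    (hπ0 : ∀ i a, 0 ≤ π i a) (hπ1 : ∀ i, ∑ a, π i a = 1)
    (V W : S → ℝ) (C : ℝ) (hC : ∀ j, |V j - W j| ≤ C) (i : S) :
    |(∑ a, π i a * ∑ j, p i a j * (g i a j + γ * V j))
      - (∑ a, π i a * ∑ j, p i a j * (g i a j + γ * W j))| ≤ γ * C := by
  have hC0 : 0 ≤ C := by
    exact le_trans (abs_nonneg _) (hC i)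
  have hdiff : (∑ a, π i a * ∑ j, p i a j * (g i a j + γ * V j))
      - (∑ a, π i a * ∑ j, p i a j * (g i a j + γ * W j))
      = ∑ a, π i a * ∑ j, p i a j * (γ * (V j - W j)) := by
    rw [← Finset.sum_sub_distrib]
    refine Finset.sum_congr rfl fun a _ => ?_
    rw [← mul_sub, ← Finset.sum_sub_distrib]
    congr 1
    refine Finset.sum_congr rfl fun j _ => ?_
    ring
  rw [hdiff]
  calc |∑ a, π i a * ∑ j, p i a j * (γ * (V j - W j))|
      ≤ ∑ a, |π i a * ∑ j, p i a j * (γ * (V j - W j))| :=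
        Finset.abs_sum_le_sum_abs _ _
    _ ≤ ∑ a, π i a * (γ * C) := by
        refine Finset.sum_le_sum fun a _ => ?_
        rw [abs_mul, abs_of_nonneg (hπ0 i a)]
        refine mul_le_mul_of_nonneg_left ?_ (hπ0 i a)
        calc |∑ j, p i a j * (γ * (V j - W j))|
            ≤ ∑ j, |p i a j * (γ * (V j - W j))| := Finset.abs_sum_le_sum_abs _ _
          _ ≤ ∑ j, p i a j * (γ * C) := by
              refine Finset.sum_le_sum fun j _ => ?_
              rw [abs_mul, abs_of_nonneg (hp0 i a j), abs_mul, abs_of_nonneg hγ0]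
              exact mul_le_mul_of_nonneg_left
                (mul_le_mul_of_nonneg_left (hC j) hγ0) (hp0 i a j)
          _ = γ * C := by rw [← Finset.sum_mul, hp1 i a, one_mul]
    _ = γ * C := by rw [← Finset.sum_mul, hπ1 i, one_mul]

/-- The Bellman operator T_π of an SRP π is a γ-contraction in the sup norm,
and consequently it has a unique fixed point V_π. -/
theorem stmt_6 {S U : Type*} [Fintype S] [Fintype U] [Nonempty S] [Nonempty U]
    (p : S → U → S → ℝ) (hp0 : ∀ i a j, 0 ≤ p i a j)
    (hp1 : ∀ i a, ∑ j, p i a j = 1)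
    (g : S → U → S → ℝ) (γ : ℝ) (hγ : γ ∈ Set.Ioo (0 : ℝ) 1)
    (π : S → U → ℝ)
    (hπ0 : ∀ i a, 0 ≤ π i a) (hπ1 : ∀ i, ∑ a, π i a = 1) :
    (∀ V W : S → ℝ,
      (Finset.univ.sup' Finset.univ_nonempty fun i =>
        |(∑ a, π i a * ∑ j, p i a j * (g i a j + γ * V j))
          - (∑ a, π i a * ∑ j, p i a j * (g i a j + γ * W j))|) ≤
        γ * (Finset.univ.sup' Finset.univ_nonempty fun i => |V i - W i|)) ∧
    (∃! Vπ : S → ℝ, ∀ i, Vπ i = ∑ a, π i a * ∑ j, p i a j * (g i a j + γ * Vπ j)) := by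
  obtain ⟨hγ0, hγ1⟩ := hγ
  constructor
  · intro V W
    refine Finset.sup'_le _ _ fun i _ => ?_
    refine key_bound p hp0 hp1 g γ hγ0.le π hπ0 hπ1 V W _ (fun j => ?_) i
    exact Finset.le_sup' (f := fun i => |V i - W i|) (Finset.mem_univ j)
  · set T : (S → ℝ) → (S → ℝ) :=
      fun V i => ∑ a, π i a * ∑ j, p i a j * (g i a j + γ * V j) with hT
    have hlip : LipschitzWith ⟨γ, hγ0.le⟩ T := by
      refine LipschitzWith.of_dist_le_mul fun V W => ?_
      rw [dist_pi_le_iff (by positivity)]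
      intro i
      rw [Real.dist_eq]
      exact key_bound p hp0 hp1 g γ hγ0.le π hπ0 hπ1 V W _
        (fun j => by rw [← Real.dist_eq]; exact dist_le_pi_dist V W j) i
    have hcw : ContractingWith ⟨γ, hγ0.le⟩ T := ⟨by exact_mod_cast hγ1, hlip⟩
    refine ⟨hcw.fixedPoint T, fun i => ?_, fun V hV => ?_⟩
    · have := hcw.fixedPoint_isFixedPt
      exact (congrFun this i).symm
    · exact hcw.fixedPoint_unique (funext fun i => (hV i).symm)
end

section
/- Let V* satisfy the optimal Bellman equation V*(i) = min_{a∈U} Σ_{j∈S} p(i,a,j)(g(i,a,j) + γ V*(j)) for all i, and let π be any SRP with V_π satisfying V_π(i) = Σ_{a∈U} π(i,a) Σ_{j∈S} p(i,a,j)(g(i,a,j) + γ V_π(j)) for all i. Then V*(i) ≤ V_π(i) for every state i. -/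
/-- The optimal value function V* is a pointwise lower bound on the value
function V_π of any SRP π. -/
theorem stmt_8 {S U : Type*} [Fintype S] [Fintype U] [Nonempty S] [Nonempty U]
    (p : S → U → S → ℝ) (hp0 : ∀ i a j, 0 ≤ p i a j)
    (hp1 : ∀ i a, ∑ j, p i a j = 1)
    (g : S → U → S → ℝ) (γ : ℝ) (hγ : γ ∈ Set.Ioo (0 : ℝ) 1)
    (Vstar : S → ℝ)
    (hVstar : ∀ i, Vstar i =
      Finset.univ.inf' Finset.univ_nonempty fun a => ∑ j, p i a j * (g i a j + γ * Vstar j))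
    (π : S → U → ℝ)
    (hπ0 : ∀ i a, 0 ≤ π i a) (hπ1 : ∀ i, ∑ a, π i a = 1)
    (Vπ : S → ℝ)
    (hVπ : ∀ i, Vπ i = ∑ a, π i a * ∑ j, p i a j * (g i a j + γ * Vπ j)) :
    ∀ i, Vstar i ≤ Vπ i := by
  obtain ⟨hγ0, hγ1⟩ := hγ
  set M : ℝ := Finset.univ.sup' Finset.univ_nonempty (fun i => Vstar i - Vπ i) with hM
  have hle : ∀ j, Vstar j - Vπ j ≤ M := fun j =>
    Finset.le_sup' (fun i => Vstar i - Vπ i) (Finset.mem_univ j)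
  have hMle : M ≤ γ * M := by
    obtain ⟨i0, _, hi0⟩ := Finset.exists_mem_eq_sup' (Finset.univ_nonempty (α := S))
      (fun i => Vstar i - Vπ i)
    have hstart : M = Vstar i0 - Vπ i0 := hM.trans hi0
    have h1 : Vstar i0 ≤ ∑ a, π i0 a * ∑ j, p i0 a j * (g i0 a j + γ * Vstar j) := by
      calc Vstar i0 = ∑ a, π i0 a * Vstar i0 := by
            rw [← Finset.sum_mul, hπ1, one_mul]
        _ ≤ _ := by
            apply Finset.sum_le_sum
            intro a _
            apply mul_le_mul_of_nonneg_left _ (hπ0 i0 a)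
            rw [hVstar i0]
            exact Finset.inf'_le _ (Finset.mem_univ a)
    have h2 : Vstar i0 - Vπ i0 ≤
        ∑ a, π i0 a * ∑ j, p i0 a j * (γ * (Vstar j - Vπ j)) := by
      have hVπ0 := hVπ i0
      calc Vstar i0 - Vπ i0
          ≤ (∑ a, π i0 a * ∑ j, p i0 a j * (g i0 a j + γ * Vstar j))
            - ∑ a, π i0 a * ∑ j, p i0 a j * (g i0 a j + γ * Vπ j) := by linarith
        _ = ∑ a, π i0 a * ∑ j, p i0 a j * (γ * (Vstar j - Vπ j)) := by
            rw [← Finset.sum_sub_distrib]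
            apply Finset.sum_congr rfl
            intro a _
            rw [← mul_sub, ← Finset.sum_sub_distrib]
            congr 1
            apply Finset.sum_congr rfl
            intro j _
            ring
    have hkey : Vstar i0 - Vπ i0 ≤ γ * M := by
      refine h2.trans ?_
      calc ∑ a, π i0 a * ∑ j, p i0 a j * (γ * (Vstar j - Vπ j))
          ≤ ∑ a, π i0 a * ∑ j, p i0 a j * (γ * M) := by
            apply Finset.sum_le_sum
            intro a _
            apply mul_le_mul_of_nonneg_left _ (hπ0 i0 a)
            apply Finset.sum_le_sum
            intro j _
            exact mul_le_mul_of_nonneg_left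
              (mul_le_mul_of_nonneg_left (hle j) hγ0.le) (hp0 i0 a j)
        _ = γ * M := by
            have h3 : ∀ a : U, ∑ j, p i0 a j * (γ * M) = γ * M := by
              intro a
              rw [← Finset.sum_mul, hp1, one_mul]
            simp_rw [h3, ← Finset.sum_mul, hπ1, one_mul]
    linarith
  have hM0 : M ≤ 0 := by nlinarith
  intro i
  have := hle i
  linarith
end

section
/- Let V̂ satisfy the Bellman equation for an SRP π̂ and V* satisfy the Bellman equation for an SRP π* (as in Proposition 1). If max_{i,a} |ḡ(i,a)| ≤ B for some B > 0 and max_i Σ_{a∈U} |π̂(i,a) − π*(i,a)| < ε(1 − γ)²/B for some ε > 0, then max_i |V̂(i) − V*(i)| < ε. -/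
/-- Theorem 3-type bound: if max_{i,a}|ḡ(i,a)| ≤ B and the SRPs π̂, π* are
ε(1−γ)²/B-close in the max-ℓ¹ norm, then ‖V̂ − V*‖_∞ < ε. -/
theorem stmt_12 {S U : Type*} [Fintype S] [Fintype U] [Nonempty S] [Nonempty U]
    (p : S → U → S → ℝ) (hp0 : ∀ i a j, 0 ≤ p i a j)
    (hp1 : ∀ i a, ∑ j, p i a j = 1)
    (g : S → U → S → ℝ) (γ : ℝ) (hγ : γ ∈ Set.Ioo (0 : ℝ) 1)
    (πhat πstar : S → U → ℝ)
    (hπhat0 : ∀ i a, 0 ≤ πhat i a) (hπhat1 : ∀ i, ∑ a, πhat i a = 1)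
    (hπstar0 : ∀ i a, 0 ≤ πstar i a) (hπstar1 : ∀ i, ∑ a, πstar i a = 1)
    (Vhat Vstar : S → ℝ)
    (hVhat : ∀ i, Vhat i = ∑ a, πhat i a * ∑ j, p i a j * (g i a j + γ * Vhat j))
    (hVstar : ∀ i, Vstar i = ∑ a, πstar i a * ∑ j, p i a j * (g i a j + γ * Vstar j))
    (B : ℝ) (hB : 0 < B)
    (hg : (Finset.univ.sup' Finset.univ_nonempty fun ia : S × U =>
      |∑ j, p ia.1 ia.2 j * g ia.1 ia.2 j|) ≤ B)
    (ε : ℝ) (hε : 0 < ε)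
    (hclose : (Finset.univ.sup' Finset.univ_nonempty fun i =>
      ∑ a, |πhat i a - πstar i a|) < ε * (1 - γ) ^ 2 / B) :
    (Finset.univ.sup' Finset.univ_nonempty fun i => |Vhat i - Vstar i|) < ε := by
  obtain ⟨hγ0, hγ1⟩ := hγ
  have h1γ : 0 < 1 - γ := by linarith
  set D := (Finset.univ.sup' Finset.univ_nonempty fun i => |Vhat i - Vstar i|) with hDdef
  set M := (Finset.univ.sup' Finset.univ_nonempty fun i => |Vstar i|) with hMdef
  set δ := (Finset.univ.sup' Finset.univ_nonempty fun i =>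
      ∑ a, |πhat i a - πstar i a|) with hδdef
  have hδ0 : 0 ≤ δ :=
    le_trans (Finset.sum_nonneg fun a _ => abs_nonneg _)
      (Finset.le_sup' (fun i => ∑ a, |πhat i a - πstar i a|)
        (Finset.mem_univ (Classical.arbitrary S)))
  have hVM : ∀ j, |Vstar j| ≤ M := fun j =>
    Finset.le_sup' (fun i => |Vstar i|) (Finset.mem_univ j)
  have hVD : ∀ j, |Vhat j - Vstar j| ≤ D := fun j =>
    Finset.le_sup' (fun i => |Vhat i - Vstar i|) (Finset.mem_univ j)
  have hM0 : 0 ≤ M := le_trans (abs_nonneg _) (hVM (Classical.arbitrary S))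
  have hD0 : 0 ≤ D := le_trans (abs_nonneg _) (hVD (Classical.arbitrary S))
  have hδi : ∀ i, ∑ a, |πhat i a - πstar i a| ≤ δ := fun i =>
    Finset.le_sup' (fun i => ∑ a, |πhat i a - πstar i a|) (Finset.mem_univ i)
  have hgB : ∀ i a, |∑ j, p i a j * g i a j| ≤ B := fun i a =>
    le_trans (Finset.le_sup' (f := fun ia : S × U => |∑ j, p ia.1 ia.2 j * g ia.1 ia.2 j|)
      (Finset.mem_univ (i, a))) hg
  have hpV : ∀ (V : S → ℝ) (C : ℝ), (∀ j, |V j| ≤ C) → ∀ i a, |∑ j, p i a j * V j| ≤ C := by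
    intro V C hC i a
    refine le_trans (Finset.abs_sum_le_sum_abs _ _) ?_
    calc ∑ j, |p i a j * V j| ≤ ∑ j, p i a j * C := by
          apply Finset.sum_le_sum; intro j _
          rw [abs_mul, abs_of_nonneg (hp0 i a j)]
          exact mul_le_mul_of_nonneg_left (hC j) (hp0 i a j)
      _ = C := by rw [← Finset.sum_mul, hp1]; ring
  have hQ : ∀ i a, |∑ j, p i a j * (g i a j + γ * Vstar j)| ≤ B + γ * M := by
    intro i a
    have hsplit : ∑ j, p i a j * (g i a j + γ * Vstar j)
        = (∑ j, p i a j * g i a j) + γ * ∑ j, p i a j * Vstar j := by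
      rw [Finset.mul_sum, ← Finset.sum_add_distrib]
      apply Finset.sum_congr rfl; intro j _; ring
    rw [hsplit]
    refine le_trans (abs_add_le _ _) ?_
    have h2 : |γ * ∑ j, p i a j * Vstar j| ≤ γ * M := by
      rw [abs_mul, abs_of_pos hγ0]
      exact mul_le_mul_of_nonneg_left (hpV Vstar M hVM i a) hγ0.le
    linarith [hgB i a]
  have hMB : (B + γ * M) * (1 - γ) ≤ B := by
    have hMle : M ≤ B + γ * M := by
      apply Finset.sup'_le
      intro i _
      rw [hVstar i]
      refine le_trans (Finset.abs_sum_le_sum_abs _ _) ?_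
      calc ∑ a, |πstar i a * ∑ j, p i a j * (g i a j + γ * Vstar j)|
          ≤ ∑ a, πstar i a * (B + γ * M) := by
            apply Finset.sum_le_sum; intro a _
            rw [abs_mul, abs_of_nonneg (hπstar0 i a)]
            exact mul_le_mul_of_nonneg_left (hQ i a) (hπstar0 i a)
        _ = B + γ * M := by rw [← Finset.sum_mul, hπstar1]; ring
    nlinarith
  have hDle : D ≤ δ * (B + γ * M) + γ * D := by
    apply Finset.sup'_le
    intro i _
    have hdiff : Vhat i - Vstar i
        = ∑ a, ((πhat i a - πstar i a) * (∑ j, p i a j * (g i a j + γ * Vstar j))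
            + πhat i a * (γ * ∑ j, p i a j * (Vhat j - Vstar j))) := by
      rw [hVhat i, hVstar i, ← Finset.sum_sub_distrib]
      apply Finset.sum_congr rfl
      intro a _
      have hsplit : ∑ j, p i a j * (g i a j + γ * Vhat j)
          = (∑ j, p i a j * (g i a j + γ * Vstar j))
            + γ * ∑ j, p i a j * (Vhat j - Vstar j) := by
        rw [Finset.mul_sum, ← Finset.sum_add_distrib]
        apply Finset.sum_congr rfl; intro j _; ring
      rw [hsplit]; ring
    rw [hdiff]
    refine le_trans (Finset.abs_sum_le_sum_abs _ _) ?_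
    calc ∑ a, |(πhat i a - πstar i a) * (∑ j, p i a j * (g i a j + γ * Vstar j))
            + πhat i a * (γ * ∑ j, p i a j * (Vhat j - Vstar j))|
        ≤ ∑ a, (|πhat i a - πstar i a| * (B + γ * M) + πhat i a * (γ * D)) := by
          apply Finset.sum_le_sum; intro a _
          refine le_trans (abs_add_le _ _) ?_
          have h1 : |(πhat i a - πstar i a) * (∑ j, p i a j * (g i a j + γ * Vstar j))|
              ≤ |πhat i a - πstar i a| * (B + γ * M) := by
            rw [abs_mul]
            exact mul_le_mul_of_nonneg_left (hQ i a) (abs_nonneg _)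
          have h2 : |πhat i a * (γ * ∑ j, p i a j * (Vhat j - Vstar j))|
              ≤ πhat i a * (γ * D) := by
            rw [abs_mul, abs_of_nonneg (hπhat0 i a), abs_mul, abs_of_pos hγ0]
            exact mul_le_mul_of_nonneg_left
              (mul_le_mul_of_nonneg_left (hpV _ D hVD i a) hγ0.le) (hπhat0 i a)
          linarith
      _ = (∑ a, |πhat i a - πstar i a|) * (B + γ * M) + γ * D := by
          rw [Finset.sum_add_distrib, ← Finset.sum_mul, ← Finset.sum_mul, hπhat1]; ring
      _ ≤ δ * (B + γ * M) + γ * D := by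
          have := hδi i
          have hBM0 : 0 ≤ B + γ * M := by positivity
          nlinarith
  rw [lt_div_iff₀ hB] at hclose
  have h2 : D * (1 - γ) * (1 - γ) ≤ δ * (B + γ * M) * (1 - γ) := by nlinarith
  have h3 : δ * ((B + γ * M) * (1 - γ)) ≤ δ * B := mul_le_mul_of_nonneg_left hMB hδ0
  nlinarith [sq_nonneg (1 - γ)]
end
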